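/- Let u_A, u_D : ℝⁿ × ℝᵐ → ℝ be C², and let β : ℝⁿ × [0,T] → ℝᵐ be C² and satisfy ∂_t β(α,t) = ∂_β u_A(α, β(α,t)) for all t ∈ [0,T]. Suppose λ : [0,T] → ℝᵐ (a row vector / covector) satisfies the adjoint ODE dλ/dt = -λ(t) ∂²_β u_A(α, β(α,t)) with terminal condition λ(T) = -∂_β u_D(α, β(α,T)). Then the total derivative of α ↦ u_D(α, β(α,T)) equals ∂_α u_D(α, β(α,T)) - ∫₀ᵀ λ(t) ∂_α ∂_β u_A(α, β(α,t)) dt. -/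

import Mathlib

/-!
Write `g = ∇_b u_A` and `D t = ∂ₐβ(α, t)`. Since mixed partials of the `C²` flow commute,
differentiating the flow equation in `a` gives the variational equation `D' = ∂_b g ∘ D + ∂ₐg`,
with `D 0 = 0` because the initial value does not depend on `a`. Against the adjoint equation
`λ' = -λ ∘ ∂_b g` the homogeneous terms cancel, so `(λ ∘ D)' = λ ∘ ∂ₐg` and
`∫₀ᵀ λ ∘ ∂ₐg = λ(T) ∘ D T`. The chain rule gives `d/da u_D(a, β(a,T)) = ∂ₐu_D + ∂_b u_D ∘ D T`,
and the terminal condition identifies the second term with `-λ(T) ∘ D T`.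
-/

open Function ContinuousLinearMap Set

section

variable {E F G : Type*} [NormedAddCommGroup E] [NormedSpace ℝ E] [NormedAddCommGroup F]
  [NormedSpace ℝ F] [NormedAddCommGroup G] [NormedSpace ℝ G]

theorem DifferentiableAt.hasFDerivAt_uncurry_left {f : E → F → G} {a : E} {b : F}
    (hf : DifferentiableAt ℝ (uncurry f) (a, b)) :
    HasFDerivAt (fun x => f x b) ((fderiv ℝ (uncurry f) (a, b)).comp (inl ℝ E F)) a :=
  (hf.hasFDerivAt.comp a (hasFDerivAt_prodMk_left (𝕜 := ℝ) a b) :)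

theorem DifferentiableAt.hasFDerivAt_uncurry_right {f : E → F → G} {a : E} {b : F}
    (hf : DifferentiableAt ℝ (uncurry f) (a, b)) :
    HasFDerivAt (f a) ((fderiv ℝ (uncurry f) (a, b)).comp (inr ℝ E F)) b :=
  (hf.hasFDerivAt.comp b (hasFDerivAt_prodMk_right (𝕜 := ℝ) a b) :)

theorem DifferentiableAt.hasFDerivAt_uncurry_comp {f : E → F → G} {φ : E → F} {a : E}
    (hf : DifferentiableAt ℝ (uncurry f) (a, φ a)) (hφ : DifferentiableAt ℝ φ a) :
    HasFDerivAt (fun x => f x (φ x))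
      (fderiv ℝ (fun x => f x (φ a)) a + (fderiv ℝ (f a) (φ a)).comp (fderiv ℝ φ a)) a := by
  have hchain := hf.hasFDerivAt.comp a ((hasFDerivAt_id a).prodMk hφ.hasFDerivAt)
  refine hchain.congr_fderiv ?_
  rw [hf.hasFDerivAt_uncurry_left.fderiv, hf.hasFDerivAt_uncurry_right.fderiv]
  ext v
  simp [← map_add]

theorem ContDiff.continuous_fderiv_uncurry_left {f : E → F → G}
    (hf : ContDiff ℝ 1 (uncurry f)) :
    Continuous fun p : E × F => fderiv ℝ (fun x => f x p.2) p.1 := by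
  have hfd := hf.differentiable one_ne_zero
  simp_rw [fun p : E × F => (hfd p).hasFDerivAt_uncurry_left.fderiv]
  exact (hf.continuous_fderiv one_ne_zero).clm_comp continuous_const

/-- Mixed partials commute: `∂ₜ ∂ₐ β = ∂ₐ ∂ₜ β`. -/
theorem ContDiff.hasDerivAt_fderiv_slice {β : E → ℝ → F} (hβ : ContDiff ℝ 2 (uncurry β))
    {α : E} {t : ℝ} {L : E →L[ℝ] F} (hL : HasFDerivAt (fun a => deriv (β a) t) L α) :
    HasDerivAt (fun s => fderiv ℝ (fun a => β a s) α) L t := by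
  set Φ := fderiv ℝ (uncurry β)
  have hβd := hβ.differentiable two_ne_zero
  have hΦd : Differentiable ℝ Φ :=
    (hβ.fderiv_right (m := 1) (by norm_num)).differentiable one_ne_zero
  have hslice : (fun s => fderiv ℝ (fun a => β a s) α) = fun s => (Φ (α, s)).comp (inl ℝ E ℝ) :=
    funext fun s => (hβd (α, s)).hasFDerivAt_uncurry_left.fderiv
  have hdt : (fun a => deriv (β a) t) = fun a => Φ (a, t) (0, 1) := by
    funext a
    simp [(hβd (a, t)).hasFDerivAt_uncurry_right.hasDerivAt.deriv, Φ]
  have hΦa : HasFDerivAt (fun a => Φ (a, t) (0, 1))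
      ((apply ℝ F ((0 : E), (1 : ℝ))).comp ((fderiv ℝ Φ (α, t)).comp (inl ℝ E ℝ))) α :=
    (apply ℝ F ((0 : E), (1 : ℝ))).hasFDerivAt.comp α
      ((hΦd (α, t)).hasFDerivAt.comp α (hasFDerivAt_prodMk_left (𝕜 := ℝ) α t))
  have hΦt : HasDerivAt (fun s => Φ (α, s)) (fderiv ℝ Φ (α, t) (0, 1)) t :=
    (hΦd (α, t)).hasFDerivAt.comp_hasDerivAt t ((hasDerivAt_const t α).prodMk (hasDerivAt_id t))
  have hsymm : IsSymmSndFDerivAt ℝ (uncurry β) (α, t) :=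
    hβ.contDiffAt.isSymmSndFDerivAt (by simp)
  rw [hdt] at hL
  rw [hslice, hL.unique hΦa]
  refine (hΦt.clm_comp (hasDerivAt_const t (inl ℝ E ℝ))).congr_deriv ?_
  ext v
  simp only [comp_zero, add_zero]
  exact hsymm (0, 1) (v, 0)

theorem ContDiff.hasDerivAt_fderiv_slice_of_flow {β : E → ℝ → F} {g : E → F → F}
    (hβ : ContDiff ℝ 2 (uncurry β)) {α : E} {t : ℝ}
    (hg : DifferentiableAt ℝ (uncurry g) (α, β α t))
    (hflow : ∀ a, HasDerivAt (β a) (g a (β a t)) t) :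
    HasDerivAt (fun s => fderiv ℝ (fun a => β a s) α)
      ((fderiv ℝ (g α) (β α t)).comp (fderiv ℝ (fun a => β a t) α) +
        fderiv ℝ (fun a => g a (β α t)) α) t := by
  have hβt : DifferentiableAt ℝ (fun a => β a t) α :=
    ((hβ.differentiable two_ne_zero) (α, t)).hasFDerivAt_uncurry_left.differentiableAt
  refine hβ.hasDerivAt_fderiv_slice ?_
  rw [funext fun a => (hflow a).deriv, add_comm]
  exact hg.hasFDerivAt_uncurry_comp hβt

section Adjoint

variable {A : ℝ → F →L[ℝ] F} {H : ℝ → E →L[ℝ] F} {D : ℝ → E →L[ℝ] F} {lam : ℝ → F →L[ℝ] G}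

/-- The adjoint equation `λ' = -λ ∘ A` cancels the homogeneous part of `D' = A ∘ D + H`. -/
theorem hasDerivAt_comp_of_adjoint {t : ℝ} (hD : HasDerivAt D ((A t).comp (D t) + H t) t)
    (hlam : HasDerivAt lam (-(lam t).comp (A t)) t) :
    HasDerivAt (fun s => (lam s).comp (D s)) ((lam t).comp (H t)) t := by
  refine (hlam.clm_comp hD).congr_deriv ?_
  rw [comp_add, neg_comp, ContinuousLinearMap.comp_assoc, neg_add_cancel_left]

theorem integral_comp_eq_sub_of_adjoint [CompleteSpace G] {T : ℝ} (hT : 0 ≤ T)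
    (hD : ∀ t ∈ Icc 0 T, HasDerivAt D ((A t).comp (D t) + H t) t)
    (hlam : ∀ t ∈ Icc 0 T, HasDerivAt lam (-(lam t).comp (A t)) t)
    (hH : ContinuousOn H (Icc 0 T)) :
    ∫ t in 0..T, (lam t).comp (H t) = (lam T).comp (D T) - (lam 0).comp (D 0) := by
  rw [← uIcc_of_le hT] at hD hlam hH
  have hlam_cont : ContinuousOn lam (uIcc 0 T) :=
    fun t ht => (hlam t ht).continuousAt.continuousWithinAt
  have hint : IntervalIntegrable (fun t => (lam t).comp (H t)) MeasureTheory.volume 0 T :=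
    (hlam_cont.clm_comp hH).intervalIntegrable
  have hderiv : ∀ t ∈ uIcc 0 T,
      HasDerivAt (fun s => (lam s).comp (D s)) ((lam t).comp (H t)) t :=
    fun t ht => hasDerivAt_comp_of_adjoint (hD t ht) (hlam t ht)
  exact intervalIntegral.integral_eq_sub_of_hasDerivAt hderiv hint

end Adjoint

end

theorem ContDiff.contDiff_uncurry_gradient {E F : Type*} [NormedAddCommGroup E]
    [NormedSpace ℝ E] [NormedAddCommGroup F] [InnerProductSpace ℝ F] [CompleteSpace F]
    {u : E → F → ℝ} (hu : ContDiff ℝ 2 (uncurry u)) :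
    ContDiff ℝ 1 (uncurry fun a => gradient (u a)) := by
  have hud := hu.differentiable two_ne_zero
  have hgrad : (uncurry fun a => gradient (u a)) = fun p =>
      (InnerProductSpace.toDual ℝ F).symm ((fderiv ℝ (uncurry u) p).comp (inr ℝ E F)) :=
    funext fun p => congrArg _ (hud p).hasFDerivAt_uncurry_right.fderiv
  rw [hgrad]
  exact (InnerProductSpace.toDual ℝ F).symm.contDiff.comp
    ((hu.fderiv_right (m := 1) (by norm_num)).clm_comp contDiff_const)

/-- Adjoint method for the PDE-constrained reformulation of the Stackelberg game.
If `β(a,t)` follows the gradient-ascent flow of the attacker utility in `β`,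
starting from `β(a,0) = 0`, and the adjoint covector `λ` solves
`λ' t = -λ(t) ∘ ∂²_β u_A(α, β(α,t))` with terminal condition
`λ T = -∂_β u_D(α, β(α,T))`, then the total derivative of `a ↦ u_D(a, β(a,T))`
at `α` equals `∂_α u_D(α, β(α,T)) - ∫₀ᵀ λ(t) ∘ ∂_α ∂_β u_A(α, β(α,t)) dt`. -/
theorem stmt6 (n m : ℕ)
    (uA uD : EuclideanSpace ℝ (Fin n) → EuclideanSpace ℝ (Fin m) → ℝ)
    (huA : ContDiff ℝ 2 (Function.uncurry uA))
    (huD : ContDiff ℝ 2 (Function.uncurry uD))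
    (gA : EuclideanSpace ℝ (Fin n) → EuclideanSpace ℝ (Fin m) →
      EuclideanSpace ℝ (Fin m))
    (hgA : ∀ a b, gA a b = gradient (uA a) b)
    (T : ℝ) (hT : 0 < T)
    (β : EuclideanSpace ℝ (Fin n) → ℝ → EuclideanSpace ℝ (Fin m))
    (hβsmooth : ContDiff ℝ 2 (fun p : EuclideanSpace ℝ (Fin n) × ℝ => β p.1 p.2))
    (hinit : ∀ a, β a 0 = 0)
    (hflow : ∀ a t, t ∈ Set.Icc (0 : ℝ) T → HasDerivAt (β a) (gA a (β a t)) t)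
    (α : EuclideanSpace ℝ (Fin n))
    (lam : ℝ → (EuclideanSpace ℝ (Fin m) →L[ℝ] ℝ))
    (hadj : ∀ t ∈ Set.Icc (0 : ℝ) T,
      HasDerivAt lam (-(lam t).comp (fderiv ℝ (gA α) (β α t))) t)
    (hterm : lam T = -(fderiv ℝ (uD α) (β α T))) :
    fderiv ℝ (fun a => uD a (β a T)) α =
      fderiv ℝ (fun a => uD a (β α T)) α -
        ∫ t in (0 : ℝ)..T, (lam t).comp
          (fderiv ℝ (fun a => gA a (β α t)) α) := by
  have hβ : ContDiff ℝ 2 (uncurry β) := hβsmooth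
  have hg : ContDiff ℝ 1 (uncurry gA) := by
    rw [show gA = fun a => gradient (uA a) from funext fun a => funext (hgA a)]
    exact huA.contDiff_uncurry_gradient
  have hβT : DifferentiableAt ℝ (fun a => β a T) α :=
    (hβ.differentiable two_ne_zero (α, T)).hasFDerivAt_uncurry_left.differentiableAt
  have hvar : ∀ t ∈ Icc 0 T, HasDerivAt (fun s => fderiv ℝ (fun a => β a s) α)
      ((fderiv ℝ (gA α) (β α t)).comp (fderiv ℝ (fun a => β a t) α) +
        fderiv ℝ (fun a => gA a (β α t)) α) t := fun t ht =>
    hβ.hasDerivAt_fderiv_slice_of_flow (hg.differentiable one_ne_zero (α, β α t))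
      (hflow · t ht)
  have hH : ContinuousOn (fun t => fderiv ℝ (fun a => gA a (β α t)) α) (Icc 0 T) :=
    (hg.continuous_fderiv_uncurry_left.comp (continuous_const.prodMk
      (hβ.continuous.comp (continuous_const.prodMk continuous_id)))).continuousOn
  have hD0 : fderiv ℝ (fun a => β a 0) α = 0 := by simp [hinit]
  rw [integral_comp_eq_sub_of_adjoint hT.le hvar hadj hH, hD0, comp_zero, sub_zero, hterm,
    neg_comp, sub_neg_eq_add]
  exact (huD.differentiable two_ne_zero _).hasFDerivAt_uncurry_comp hβT |>.fderiv
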